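/- arXiv:1908.08558 — 6 statements merged into one kernel-verified Lean document; each statement's English description precedes it below -/
import Mathlib

section
/- Let $V_1,\ldots,V_{n+1}$ be exchangeable real-valued random variables and let $\alpha\in(0,1)$. Then $\mathbb{P}\{V_{n+1} \le Q(\alpha; \hat F)\} \ge \alpha$, where $\hat F$ is the empirical distribution of $\{V_1,\ldots,V_n,\infty\}$ (i.e. $Q(\alpha;\hat F)$ is the $\lceil (n+1)\alpha\rceil$-th smallest element of the multiset $\{V_1,\ldots,V_n\}\cup\{+\infty\}$). -/
open Finset

/-- Lower `α`-quantile of a weighted empirical distribution with weights `p`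
and atoms `v` in the extended reals, with `inf ∅ = +∞`. -/
noncomputable def empQuantile {m : ℕ} (α : ℝ) (p : Fin m → ℝ) (v : Fin m → EReal) : EReal :=
  sInf {t : EReal | α ≤ ∑ i, if v i ≤ t then p i else 0}
open MeasureTheory
open scoped ENNReal

lemma quantile_iff {m : ℕ} (hm : 0 < m) {α : ℝ} (hα : 0 < α) (v : Fin m → EReal) (x : ℝ) :
    ((x : EReal) ≤ empQuantile α (fun _ => 1 / (m : ℝ)) v ↔
      ((univ.filter fun j => v j < (x : EReal)).card : ℝ) < α * m) := by
  have hm' : (0:ℝ) < m := by exact_mod_cast hm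
  have hmem : ∀ t : EReal, (α ≤ ∑ i, if v i ≤ t then (1/(m:ℝ)) else 0) ↔
      α * m ≤ ((univ.filter fun j => v j ≤ t).card : ℝ) := by
    intro t
    have hsum : (∑ i, if v i ≤ t then (1/(m:ℝ)) else 0)
        = ((univ.filter fun j => v j ≤ t).card : ℝ) / m := by
      rw [Finset.sum_ite, Finset.sum_const, Finset.sum_const_zero, add_zero, nsmul_eq_mul]
      ring
    rw [hsum, le_div_iff₀ hm']
  constructor
  · intro hle
    by_contra hcon
    push_neg at hcon
    have hpos : 0 < (univ.filter fun j => v j < (x:EReal)).card := by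
      rcases Nat.eq_zero_or_pos (univ.filter fun j => v j < (x:EReal)).card with h | h
      · exfalso; rw [h] at hcon; push_cast at hcon; nlinarith
      · exact h
    set F := univ.filter fun j => v j < (x:EReal) with hF
    have hFne : F.Nonempty := Finset.card_pos.mp hpos
    set t0 := (F.image v).max' (hFne.image v) with ht0
    have ht0x : t0 < (x:EReal) := by
      rcases Finset.mem_image.mp (Finset.max'_mem (F.image v) (hFne.image v)) with ⟨j, hj, hje⟩
      rw [ht0, ← hje]; exact (Finset.mem_filter.mp hj).2
    have ht0S : t0 ∈ {t : EReal | α ≤ ∑ i, if v i ≤ t then (1/(m:ℝ)) else 0} := by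
      rw [Set.mem_setOf_eq, hmem]
      refine le_trans hcon ?_
      have hsub : F ⊆ univ.filter fun j => v j ≤ t0 := by
        intro j hj
        simp only [Finset.mem_filter, Finset.mem_univ, true_and]
        exact Finset.le_max' _ _ (Finset.mem_image_of_mem v hj)
      exact_mod_cast Finset.card_le_card hsub
    have hq : empQuantile α (fun _ => 1 / (m : ℝ)) v ≤ t0 := sInf_le ht0S
    exact lt_irrefl _ (lt_of_le_of_lt (hle.trans hq) ht0x)
  · intro hcard
    apply le_sInf
    intro t ht
    rw [Set.mem_setOf_eq, hmem] at ht
    by_contra hxt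
    push_neg at hxt
    have hsub : (univ.filter fun j => v j ≤ t) ⊆ univ.filter fun j => v j < (x:EReal) := by
      intro j hj
      simp only [Finset.mem_filter, Finset.mem_univ, true_and] at hj ⊢
      exact lt_of_le_of_lt hj hxt
    have h1 := Finset.card_le_card hsub
    have h2 : ((univ.filter fun j => v j ≤ t).card : ℝ)
        ≤ ((univ.filter fun j => v j < (x:EReal)).card : ℝ) := Nat.cast_le.mpr h1
    linarith

lemma count_lemma {m : ℕ} (w : Fin m → ℝ) (k : ℕ) (hk : k ≤ m) :
    k ≤ (univ.filter fun i => (univ.filter fun j => w j < w i).card < k).card := by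
  rcases Nat.eq_zero_or_pos k with hk0 | hk1
  · simp [hk0]
  have hm : 0 < m := lt_of_lt_of_le hk1 hk
  have huniv : (univ : Finset (Fin m)).Nonempty := ⟨⟨0, hm⟩, Finset.mem_univ _⟩
  set T := univ.image w with hT
  have hTne : T.Nonempty := huniv.image w
  set G := T.filter (fun x => k ≤ (univ.filter fun j => w j ≤ x).card) with hG
  have hGne : G.Nonempty := by
    refine ⟨T.max' hTne, Finset.mem_filter.mpr ⟨Finset.max'_mem _ _, ?_⟩⟩
    have huf : univ.filter (fun j => w j ≤ T.max' hTne) = univ := by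
      apply Finset.filter_true_of_mem
      intro j _
      exact Finset.le_max' _ _ (Finset.mem_image_of_mem w (Finset.mem_univ j))
    rw [huf, Finset.card_univ, Fintype.card_fin]
    exact hk
  set s := G.min' hGne with hs
  have hsG := Finset.min'_mem G hGne
  have hks : k ≤ (univ.filter fun j => w j ≤ s).card := (Finset.mem_filter.mp hsG).2
  have hstrict : (univ.filter fun j => w j < s).card < k := by
    by_contra hcon
    push_neg at hcon
    set F := univ.filter fun j => w j < s with hF
    have hFne : F.Nonempty := Finset.card_pos.mp (lt_of_lt_of_le hk1 hcon)
    set s' := (F.image w).max' (hFne.image w) with hs'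
    have hs'T : s' ∈ T := by
      rcases Finset.mem_image.mp (Finset.max'_mem (F.image w) (hFne.image w)) with ⟨j, hj, hje⟩
      rw [hs', ← hje]; exact Finset.mem_image_of_mem w (Finset.mem_univ j)
    have hs'lt : s' < s := by
      rcases Finset.mem_image.mp (Finset.max'_mem (F.image w) (hFne.image w)) with ⟨j, hj, hje⟩
      rw [hs', ← hje]; exact (Finset.mem_filter.mp hj).2
    have hs'G : s' ∈ G := by
      refine Finset.mem_filter.mpr ⟨hs'T, le_trans hcon (Finset.card_le_card ?_)⟩
      intro j hj
      simp only [hF, Finset.mem_filter, Finset.mem_univ, true_and] at hj ⊢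
      exact Finset.le_max' _ _ (Finset.mem_image_of_mem w (by simp [hF, hj]))
    exact absurd (Finset.min'_le G s' hs'G) (not_le.mpr hs'lt)
  refine le_trans hks (Finset.card_le_card ?_)
  intro i hi
  simp only [Finset.mem_filter, Finset.mem_univ, true_and] at hi ⊢
  calc (univ.filter fun j => w j < w i).card
      ≤ (univ.filter fun j => w j < s).card := by
        apply Finset.card_le_card
        intro j hj
        simp only [Finset.mem_filter, Finset.mem_univ, true_and] at hj ⊢
        exact lt_of_lt_of_le hj hi
    _ < k := hstrict

lemma meas_count {m : ℕ} (i : Fin m) (k : ℕ) :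
    MeasurableSet {f : Fin m → ℝ | (univ.filter fun j => f j < f i).card < k} := by
  have hN : Measurable fun f : Fin m → ℝ => ∑ j, if f j < f i then (1:ℕ) else 0 := by
    apply Finset.measurable_sum
    intro j _
    exact Measurable.ite (measurableSet_lt (measurable_pi_apply j) (measurable_pi_apply i))
      measurable_const measurable_const
  have hset : {f : Fin m → ℝ | (univ.filter fun j => f j < f i).card < k}
      = (fun f : Fin m → ℝ => ∑ j, if f j < f i then (1:ℕ) else 0) ⁻¹' (Set.Iio k) := by
    ext f
    simp only [Set.mem_setOf_eq, Set.mem_preimage, Set.mem_Iio, Finset.card_filter]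
  rw [hset]
  exact hN measurableSet_Iio

/-- Standard conformal coverage guarantee: for exchangeable `V_1,…,V_{n+1}` and
`α ∈ (0,1)`, `P(V_{n+1} ≤ Q(α; empirical distribution of {V_1,…,V_n, ∞})) ≥ α`. -/
theorem stmt_0 {Ω : Type*} [MeasurableSpace Ω] (ℙ : Measure Ω) [IsProbabilityMeasure ℙ]
    (n : ℕ) (V : Fin (n + 1) → Ω → ℝ) (hmeas : ∀ i, Measurable (V i))
    (hexch : ∀ σ : Equiv.Perm (Fin (n + 1)),
      Measure.map (fun ω => fun i => V (σ i) ω) ℙ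
        = Measure.map (fun ω => fun i => V i ω) ℙ)
    (α : ℝ) (hα : α ∈ Set.Ioo (0:ℝ) 1) :
    ENNReal.ofReal α
      ≤ ℙ {ω | (V (Fin.last n) ω : EReal)
            ≤ empQuantile α (fun _ : Fin (n + 1) => 1 / (n + 1 : ℝ))
                (fun i => if i = Fin.last n then (⊤ : EReal) else (V i ω : EReal))} := by
  obtain ⟨hα0, hα1⟩ := hα
  set k := ⌈α * ((n+1 : ℕ) : ℝ)⌉₊ with hkdef
  have hnpos : (0:ℝ) < ((n+1 : ℕ) : ℝ) := by positivity
  have hk2 : k ≤ n + 1 := by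
    rw [hkdef]
    apply Nat.ceil_le.mpr
    nlinarith
  set E : Fin (n+1) → Set Ω :=
    fun i => {ω | (univ.filter fun j => V j ω < V i ω).card < k} with hE
  -- the target set equals E (Fin.last n)
  have hset : {ω | (V (Fin.last n) ω : EReal)
            ≤ empQuantile α (fun _ : Fin (n + 1) => 1 / (n + 1 : ℝ))
                (fun i => if i = Fin.last n then (⊤ : EReal) else (V i ω : EReal))}
      = E (Fin.last n) := by
    ext ω
    have hw : (fun _ : Fin (n+1) => 1 / (n + 1 : ℝ)) = (fun _ => 1 / (((n+1 : ℕ)) : ℝ)) := by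
      push_cast; rfl
    simp only [Set.mem_setOf_eq, hE, hw]
    rw [quantile_iff (Nat.succ_pos n) hα0]
    have hfilt : (univ.filter fun j =>
          (if j = Fin.last n then (⊤:EReal) else (V j ω : EReal)) < ((V (Fin.last n) ω : ℝ) : EReal))
        = (univ.filter fun j => V j ω < V (Fin.last n) ω) := by
      ext j
      simp only [Finset.mem_filter, Finset.mem_univ, true_and]
      by_cases hj : j = Fin.last n
      · simp [hj]
      · simp [hj, EReal.coe_lt_coe_iff]
    rw [hfilt, ← Nat.lt_ceil]
  rw [hset]
  -- measurability
  have hΦ : Measurable (fun ω : Ω => fun j => V j ω) := measurable_pi_lambda _ hmeas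
  have hS : ∀ i : Fin (n+1),
      MeasurableSet {f : Fin (n+1) → ℝ | (univ.filter fun j => f j < f i).card < k} :=
    fun i => meas_count i k
  have hEpre : ∀ i, E i = (fun ω : Ω => fun j => V j ω) ⁻¹'
      {f : Fin (n+1) → ℝ | (univ.filter fun j => f j < f i).card < k} := fun i => rfl
  have hEmeas : ∀ i, MeasurableSet (E i) := by
    intro i; rw [hEpre i]; exact hΦ (hS i)
  -- exchangeability: all E i have the same measure
  have hEq : ∀ i, ℙ (E i) = ℙ (E (Fin.last n)) := by
    intro i
    set σ := Equiv.swap i (Fin.last n) with hσ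
    have hΦσ : Measurable (fun ω : Ω => fun j => V (σ j) ω) :=
      measurable_pi_lambda _ (fun j => hmeas (σ j))
    have h1 : E i = (fun ω : Ω => fun j => V (σ j) ω) ⁻¹'
        {f : Fin (n+1) → ℝ | (univ.filter fun j => f j < f (Fin.last n)).card < k} := by
      ext ω
      simp only [Set.mem_preimage, Set.mem_setOf_eq, hE]
      have hσl : σ (Fin.last n) = i := Equiv.swap_apply_right i (Fin.last n)
      have hcard : (univ.filter fun j => V (σ j) ω < V (σ (Fin.last n)) ω).card
          = (univ.filter fun j => V j ω < V (σ (Fin.last n)) ω).card := by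
        apply Finset.card_bij (fun j _ => σ j)
        · intro a ha
          simp only [Finset.mem_filter, Finset.mem_univ, true_and] at ha ⊢
          exact ha
        · intro a _ b _ h
          exact σ.injective h
        · intro b hb
          refine ⟨σ.symm b, ?_, by simp⟩
          simp only [Finset.mem_filter, Finset.mem_univ, true_and] at hb ⊢
          rwa [Equiv.apply_symm_apply]
      rw [hcard, hσl]
    rw [h1, hEpre (Fin.last n), ← Measure.map_apply hΦσ (hS (Fin.last n)),
      ← Measure.map_apply hΦ (hS (Fin.last n)), hexch σ]
  -- pointwise counting bound
  have hcount : ∀ ω, (k : ℝ≥0∞) ≤ ∑ i, (E i).indicator (fun _ => (1:ℝ≥0∞)) ω := by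
    intro ω
    have hc := count_lemma (fun j => V j ω) k hk2
    calc (k:ℝ≥0∞)
        ≤ ((univ.filter fun i => (univ.filter fun j => V j ω < V i ω).card < k).card : ℝ≥0∞) := by
          exact_mod_cast hc
      _ = ∑ i, (E i).indicator (fun _ => (1:ℝ≥0∞)) ω := by
          rw [Finset.card_filter]
          push_cast
          apply Finset.sum_congr rfl
          intro i _
          by_cases h : ω ∈ E i
          · simp only [Set.indicator_of_mem h]
            have : (#(filter (fun j => V j ω < V i ω) univ) < k) := h
            simp [this]
          · simp only [Set.indicator_of_notMem h]
            have : ¬(#(filter (fun j => V j ω < V i ω) univ) < k) := h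
            simp [this]
  -- main bound
  have hmain : (k : ℝ≥0∞) ≤ ((n+1 : ℕ) : ℝ≥0∞) * ℙ (E (Fin.last n)) := by
    calc (k:ℝ≥0∞) = ∫⁻ _, (k:ℝ≥0∞) ∂ℙ := by simp
      _ ≤ ∫⁻ ω, ∑ i, (E i).indicator (fun _ => (1:ℝ≥0∞)) ω ∂ℙ := lintegral_mono hcount
      _ = ∑ i, ∫⁻ ω, (E i).indicator (fun _ => (1:ℝ≥0∞)) ω ∂ℙ := by
          apply lintegral_finset_sum
          intro i _
          exact measurable_one.indicator (hEmeas i)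
      _ = ∑ i : Fin (n+1), ℙ (E i) := by
          apply Finset.sum_congr rfl
          intro i _
          exact lintegral_indicator_one (hEmeas i)
      _ = ((n+1 : ℕ) : ℝ≥0∞) * ℙ (E (Fin.last n)) := by
          rw [Finset.sum_congr rfl (fun i _ => hEq i), Finset.sum_const, Finset.card_univ,
            Fintype.card_fin, nsmul_eq_mul]
  -- conclude
  have hαk : ENNReal.ofReal α * ((n+1 : ℕ) : ℝ≥0∞) ≤ (k : ℝ≥0∞) := by
    rw [← ENNReal.ofReal_natCast (n+1), ← ENNReal.ofReal_mul hα0.le,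
      ← ENNReal.ofReal_natCast k]
    exact ENNReal.ofReal_le_ofReal (Nat.le_ceil _)
  have hne : ((n+1 : ℕ) : ℝ≥0∞) ≠ 0 := by simp
  have htop : ((n+1 : ℕ) : ℝ≥0∞) ≠ ⊤ := by simp
  have hfin : ((n+1 : ℕ) : ℝ≥0∞) * ENNReal.ofReal α ≤ ((n+1 : ℕ) : ℝ≥0∞) * ℙ (E (Fin.last n)) := by
    rw [mul_comm]
    exact hαk.trans hmain
  exact (ENNReal.mul_le_mul_iff_right hne htop).mp hfin
end

section
/- Let $V_1,\ldots,V_{n+1}$ be real numbers and $p_1,\ldots,p_{n+1}\ge 0$ with $\sum_{i=1}^{n+1} p_i = 1$. For any $\alpha\in(0,1)$, $V_{n+1} \le Q(\alpha; \sum_{i=1}^{n} p_i\delta_{V_i} + p_{n+1}\delta_{V_{n+1}})$ if and only if $V_{n+1} \le Q(\alpha; \sum_{i=1}^{n} p_i\delta_{V_i} + p_{n+1}\delta_{\infty})$. -/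
open Finset

/-- Lemma 1 (infequiv): `V_{n+1} ≤ Q(α; ∑ p_i δ_{V_i} + p_{n+1} δ_{V_{n+1}})` iff
`V_{n+1} ≤ Q(α; ∑ p_i δ_{V_i} + p_{n+1} δ_∞)`. -/
theorem stmt_1 (n : ℕ) (V : Fin (n + 1) → ℝ) (p : Fin (n + 1) → ℝ)
    (hp : ∀ i, 0 ≤ p i) (hsum : ∑ i, p i = 1) (α : ℝ) (hα : α ∈ Set.Ioo (0:ℝ) 1) :
    ((V (Fin.last n) : EReal) ≤
        empQuantile α p (fun i => (V i : EReal))) ↔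
      ((V (Fin.last n) : EReal) ≤
        empQuantile α p (fun i => if i = Fin.last n then (⊤ : EReal) else (V i : EReal))) := by
  constructor
  · intro h
    refine h.trans (sInf_le_sInf ?_)
    intro t ht
    simp only [Set.mem_setOf_eq] at ht ⊢
    refine ht.trans (Finset.sum_le_sum fun i _ => ?_)
    by_cases hw : (if i = Fin.last n then (⊤ : EReal) else (V i : EReal)) ≤ t
    · have hv : (V i : EReal) ≤ t := by
        by_cases hi : i = Fin.last n
        · simp [hi] at hw; simp [hw, hi]
        · simpa [hi] using hw
      simp [hw, hv]
    · by_cases hv : (V i : EReal) ≤ t <;> simp [hw, hv, hp i]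
  · intro h
    refine le_sInf fun t ht => ?_
    by_contra hlt
    push_neg at hlt
    have ht2 : t ∈ {s : EReal | α ≤ ∑ i, if (if i = Fin.last n then (⊤ : EReal) else (V i : EReal)) ≤ s then p i else 0} := by
      simp only [Set.mem_setOf_eq] at ht ⊢
      refine le_trans ht (le_of_eq (Finset.sum_congr rfl fun i _ => ?_))
      by_cases hi : i = Fin.last n
      · subst hi
        have h1 : ¬ ((V (Fin.last n) : EReal) ≤ t) := not_le.2 hlt
        have h2 : ¬ ((⊤ : EReal) ≤ t) := fun htop => h1 (le_trans le_top htop)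
        simp [h1, h2]
      · simp [hi]
    have := le_trans h (sInf_le ht2)
    exact absurd hlt (not_lt.2 this)
end

section
/- Fix weights $p_1,\ldots,p_{n+1} \ge 0$ summing to 1 with $p_{n+1} > 0$, real atoms $V_1,\ldots,V_n$, and $\alpha\in(0,1)$. Let $\bar v^* = Q(\alpha; \sum_{i=1}^n p_i\delta_{V_i} + p_{n+1}\delta_{\infty})$ and suppose $\bar v^* < \infty$. Then for any real $v \ge \bar v^*$, $Q(\alpha; \sum_{i=1}^n p_i\delta_{V_i} + p_{n+1}\delta_{v}) = \bar v^*$. -/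
open Finset

/-- If the conformal threshold `v̄* = Q(α; ∑ p_i δ_{V_i} + p_{n+1} δ_∞)` is finite
and `p_{n+1} > 0`, then replacing the `∞` atom by any real `v ≥ v̄*` leaves the
quantile unchanged: `Q(α; ∑ p_i δ_{V_i} + p_{n+1} δ_v) = v̄*`. -/
theorem stmt_5 (n : ℕ) (V : Fin n → ℝ) (p : Fin n → ℝ) (plast : ℝ)
    (hp : ∀ i, 0 ≤ p i) (hplast : 0 < plast) (hsum : ∑ i, p i + plast = 1)
    (α : ℝ) (hα : α ∈ Set.Ioo (0:ℝ) 1)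
    (hfin : empQuantile α (Fin.snoc p plast) (Fin.snoc (fun i => (V i : EReal)) ⊤) ≠ ⊤)
    (v : ℝ)
    (hv : empQuantile α (Fin.snoc p plast) (Fin.snoc (fun i => (V i : EReal)) ⊤)
            ≤ (v : EReal)) :
    empQuantile α (Fin.snoc p plast) (Fin.snoc (fun i => (V i : EReal)) (v : EReal))
      = empQuantile α (Fin.snoc p plast) (Fin.snoc (fun i => (V i : EReal)) ⊤) := by
  unfold empQuantile at *
  apply le_antisymm
  · apply sInf_le_sInf
    intro t ht
    simp only [Set.mem_setOf_eq] at ht ⊢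
    refine ht.trans (Finset.sum_le_sum fun i _ => ?_)
    refine Fin.lastCases ?_ (fun j => ?_) i
    · simp only [Fin.snoc_last]
      by_cases h : (⊤ : EReal) ≤ t
      · have hvt : (v : EReal) ≤ t := le_top.trans h
        simp [h, hvt]
      · simp only [h, if_false]
        split <;> [exact hplast.le; exact le_refl 0]
    · simp [Fin.snoc_castSucc]
  · apply le_sInf
    intro t ht
    simp only [Set.mem_setOf_eq] at ht
    by_cases hvt : (v : EReal) ≤ t
    · exact hv.trans hvt
    · apply sInf_le
      simp only [Set.mem_setOf_eq]
      have htop : ¬ (⊤ : EReal) ≤ t := fun h => hvt (le_top.trans h)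
      refine le_of_le_of_eq ht (Finset.sum_congr rfl fun i _ => ?_)
      refine Fin.lastCases ?_ (fun j => ?_) i
      · simp [Fin.snoc_last, htop, hvt]
      · simp [Fin.snoc_castSucc]
end

section
/- Let $V_1 \le V_2 \le \cdots \le V_n$ be real numbers, $\alpha\in(0,1)$, and give each of $V_1,\ldots,V_n$ and an extra atom at $0$ the uniform weight $1/(n+1)$. Then $Q(\alpha; \frac{1}{n+1}\sum_{i=1}^n \delta_{V_i} + \frac{1}{n+1}\delta_0) \ge Q\big(\frac{n}{n+1}[\alpha - \frac{1}{n+1}]_+;\ \frac{1}{n}\sum_{i=1}^n\delta_{V_i}\big)$, where $[x]_+ = \max(x,0)$. -/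
open Finset

/-- The quantile of the empirical distribution augmented with an atom at 0 dominates
a deflated quantile of the unaugmented empirical distribution:
`Q(α; (1/(n+1))∑ δ_{V_i} + (1/(n+1)) δ_0) ≥ Q((n/(n+1))[α − 1/(n+1)]₊; (1/n)∑ δ_{V_i})`. -/
theorem stmt_6 (n : ℕ) (hn : 0 < n) (V : Fin n → ℝ) (hVmono : Monotone V)
    (α : ℝ) (hα : α ∈ Set.Ioo (0:ℝ) 1) :
    empQuantile ((n / (n + 1 : ℝ)) * max (α - 1 / (n + 1 : ℝ)) 0)
        (fun _ : Fin n => 1 / (n : ℝ)) (fun i => (V i : EReal))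
      ≤ empQuantile α (Fin.snoc (fun _ : Fin n => 1 / (n + 1 : ℝ)) (1 / (n + 1 : ℝ)))
          (Fin.snoc (fun i => (V i : EReal)) ((0 : ℝ) : EReal)) := by
  classical
  apply sInf_le_sInf
  intro t ht
  simp only [Set.mem_setOf_eq] at ht ⊢
  rw [Fin.sum_univ_castSucc] at ht
  simp only [Fin.snoc_castSucc, Fin.snoc_last] at ht
  have hsum : ∀ c : ℝ, (∑ i : Fin n, if (V i : EReal) ≤ t then c else 0)
      = ((univ.filter (fun i => (V i : EReal) ≤ t)).card : ℝ) * c := by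
    intro c
    rw [Finset.sum_ite, Finset.sum_const, Finset.sum_const]
    simp [mul_comm]
  set k : ℝ := ((univ.filter (fun i => (V i : EReal) ≤ t)).card : ℝ) with hkdef
  rw [hsum] at ht ⊢
  have hk0 : (0:ℝ) ≤ k := Nat.cast_nonneg _
  have hn1 : (0:ℝ) < (n:ℝ) + 1 := by positivity
  have hnp : (0:ℝ) < (n:ℝ) := by exact_mod_cast hn
  have hif : (if ((0:ℝ):EReal) ≤ t then 1 / ((n:ℝ) + 1) else 0) ≤ 1 / ((n:ℝ) + 1) := by
    split
    · exact le_refl _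
    · positivity
  have key : α - 1 / ((n:ℝ) + 1) ≤ k * (1 / ((n:ℝ) + 1)) := by linarith
  have key2 : (α - 1 / ((n:ℝ) + 1)) * ((n:ℝ) + 1) ≤ k := by
    have := mul_le_mul_of_nonneg_right key (le_of_lt hn1)
    calc (α - 1 / ((n:ℝ) + 1)) * ((n:ℝ) + 1) ≤ k * (1 / ((n:ℝ) + 1)) * ((n:ℝ) + 1) := this
      _ = k := by field_simp
  rcases max_cases (α - 1 / ((n:ℝ) + 1)) 0 with ⟨h1, h2⟩ | ⟨h1, h2⟩ <;> rw [h1]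
  · rw [mul_one_div, div_mul_eq_mul_div, div_le_div_iff₀ hn1 hnp]
    nlinarith [mul_le_mul_of_nonneg_right key2 (le_of_lt hn1), h2, hnp]
  · rw [mul_zero]
    positivity
end

section
/- Let $V_1,\ldots,V_{n+1}$ be exchangeable random variables, and for each $i$ let $v^*_i$ be a statistic that is equivariant under permutations in the following sense: for any permutation $\sigma$, the value of $v^*_i$ computed from the permuted data $(V_{\sigma(1)},\ldots,V_{\sigma(n+1)})$ equals $v^*_{\sigma(i)}$ computed from the original data. If almost surely $\frac{1}{n+1}\sum_{i=1}^{n+1}\mathbb{1}\{V_i \le v^*_i\} \ge \alpha$, then $\mathbb{P}\{V_{n+1} \le v^*_{n+1}\} \ge \alpha$. -/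
/-!
Swapping coordinates `i` and `n + 1` leaves the law of the data unchanged and, by equivariance,
carries the event `{V_i ≤ v*_i}` onto `{V_{n+1} ≤ v*_{n+1}}`; so all `n + 1` coverage events have
the same probability `p`. Integrating the almost sure bound on the empirical coverage gives
`α ≤ p`.
-/

open MeasureTheory Finset

section

variable {Ω ι β : Type*}

def IsEquivariantFamily (E : ι → Set (ι → β)) : Prop :=
  ∀ (σ : Equiv.Perm ι) (x : ι → β) (i : ι), (fun j => x (σ j)) ∈ E i ↔ x ∈ E (σ i)

theorem isEquivariantFamily_le_threshold [LinearOrder β] (v : ι → (ι → β) → β)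
    (hv : ∀ (σ : Equiv.Perm ι) (x : ι → β) (i : ι), v i (fun j => x (σ j)) = v (σ i) x) :
    IsEquivariantFamily fun i => {x : ι → β | x i ≤ v i x} := by
  intro σ x i
  change x (σ i) ≤ v i (fun j => x (σ j)) ↔ x (σ i) ≤ v (σ i) x
  rw [hv]

variable [MeasurableSpace Ω] [MeasurableSpace β]

def IsExchangeable (μ : Measure Ω) (X : Ω → ι → β) : Prop :=
  ∀ σ : Equiv.Perm ι, μ.map (fun ω i => X ω (σ i)) = μ.map X

variable {μ : Measure Ω}

theorem IsExchangeable.measure_preimage_eq [Fintype ι] [DecidableEq ι] {X : Ω → ι → β}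
    (hexch : IsExchangeable μ X) (hX : Measurable X) {E : ι → Set (ι → β)}
    (hE : IsEquivariantFamily E) (hEmeas : ∀ i, MeasurableSet (E i)) (i j : ι) :
    μ (X ⁻¹' E i) = μ (X ⁻¹' E j) := by
  let σ := Equiv.swap i j
  have hXσ : Measurable fun ω k => X ω (σ k) :=
    measurable_pi_lambda _ fun k => (measurable_pi_apply (σ k)).comp hX
  have hpre : (fun ω k => X ω (σ k)) ⁻¹' E i = X ⁻¹' E j := by
    ext ω
    simpa [σ] using hE σ (X ω) i
  rw [← hpre, ← Measure.map_apply hXσ (hEmeas i), hexch σ, Measure.map_apply hX (hEmeas i)]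

theorem ofReal_le_measure_of_ae_le_mean_indicator [IsProbabilityMeasure μ] [Fintype ι]
    {A : ι → Set Ω} (hA : ∀ i, MeasurableSet (A i)) {j : ι} (hAeq : ∀ i, μ (A i) = μ (A j))
    {α : ℝ} (hcov : ∀ᵐ ω ∂μ, α ≤ (1 / Fintype.card ι : ℝ) * ∑ i, (A i).indicator 1 ω) :
    ENNReal.ofReal α ≤ μ (A j) := by
  have hint : ∀ i, Integrable ((A i).indicator 1) μ := fun i =>
    (integrable_const (1 : ℝ)).indicator (hA i)
  have haverage : ∫ ω, (1 / Fintype.card ι : ℝ) * ∑ i, (A i).indicator 1 ω ∂μ = μ.real (A j) := by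
    have hcard : (Fintype.card ι : ℝ) ≠ 0 :=
      Nat.cast_ne_zero.mpr (Fintype.card_pos_iff.mpr ⟨j⟩).ne'
    simp only [integral_const_mul, integral_finsetSum _ fun i _ => hint i,
      integral_indicator_one (hA _), measureReal_def, hAeq, sum_const, card_univ, nsmul_eq_mul]
    field_simp
  have hle : α ≤ ∫ ω, (1 / Fintype.card ι : ℝ) * ∑ i, (A i).indicator 1 ω ∂μ := by
    simpa using integral_mono_ae (integrable_const α)
      ((integrable_finsetSum _ fun i _ => hint i).const_mul _) hcov
  rw [haverage, measureReal_def] at hle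
  exact (ENNReal.ofReal_le_iff_le_toReal (measure_ne_top μ _)).mpr hle

end

theorem stmt_10_general {Ω : Type*} [MeasurableSpace Ω] (ℙ : Measure Ω) [IsProbabilityMeasure ℙ]
    (n : ℕ) (V : Fin (n + 1) → Ω → ℝ) (hmeas : ∀ i, Measurable (V i))
    (hexch : ∀ σ : Equiv.Perm (Fin (n + 1)),
      Measure.map (fun ω => fun i => V (σ i) ω) ℙ
        = Measure.map (fun ω => fun i => V i ω) ℙ)
    (vstar : Fin (n + 1) → (Fin (n + 1) → ℝ) → ℝ)
    (hvmeas : ∀ i, Measurable (vstar i))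
    (hequiv : ∀ (σ : Equiv.Perm (Fin (n + 1))) (x : Fin (n + 1) → ℝ) (i : Fin (n + 1)),
      vstar i (fun j => x (σ j)) = vstar (σ i) x)
    (α : ℝ)
    (hcov : ∀ᵐ ω ∂ℙ,
      α ≤ (1 / (n + 1 : ℝ)) * ∑ i,
        (if V i ω ≤ vstar i (fun j => V j ω) then (1 : ℝ) else 0)) :
    ENNReal.ofReal α
      ≤ ℙ {ω | V (Fin.last n) ω ≤ vstar (Fin.last n) (fun j => V j ω)} := by
  set X : Ω → Fin (n + 1) → ℝ := fun ω i => V i ω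
  set E : Fin (n + 1) → Set (Fin (n + 1) → ℝ) := fun i => {x | x i ≤ vstar i x}
  have hX : Measurable X := measurable_pi_lambda _ hmeas
  have hXexch : IsExchangeable ℙ X := hexch
  have hEmeas : ∀ i, MeasurableSet (E i) := fun i =>
    measurableSet_le (measurable_pi_apply i) (hvmeas i)
  have hEeq : ∀ i, ℙ (X ⁻¹' E i) = ℙ (X ⁻¹' E (Fin.last n)) := fun i =>
    hXexch.measure_preimage_eq hX (isEquivariantFamily_le_threshold vstar hequiv) hEmeas i _
  refine ofReal_le_measure_of_ae_le_mean_indicator (fun i => hX (hEmeas i)) hEeq ?_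
  filter_upwards [hcov] with ω hω
  simpa [Set.indicator_apply, X, E] using hω

/-- Abstract Corollary 1 / Theorem 3: exchangeable scores plus permutation-equivariant
thresholds `v*_i` with a.s. weighted-average coverage `≥ α` imply
`P(V_{n+1} ≤ v*_{n+1}) ≥ α`. -/
theorem stmt_10 {Ω : Type*} [MeasurableSpace Ω] (ℙ : Measure Ω) [IsProbabilityMeasure ℙ]
    (n : ℕ) (V : Fin (n + 1) → Ω → ℝ) (hmeas : ∀ i, Measurable (V i))
    (hexch : ∀ σ : Equiv.Perm (Fin (n + 1)),
      Measure.map (fun ω => fun i => V (σ i) ω) ℙ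
        = Measure.map (fun ω => fun i => V i ω) ℙ)
    (vstar : Fin (n + 1) → (Fin (n + 1) → ℝ) → ℝ)
    (hvmeas : ∀ i, Measurable (vstar i))
    (hequiv : ∀ (σ : Equiv.Perm (Fin (n + 1))) (x : Fin (n + 1) → ℝ) (i : Fin (n + 1)),
      vstar i (fun j => x (σ j)) = vstar (σ i) x)
    (α : ℝ) (hα : α ∈ Set.Ioo (0:ℝ) 1)
    (hcov : ∀ᵐ ω ∂ℙ,
      α ≤ (1 / (n + 1 : ℝ)) * ∑ i,
        (if V i ω ≤ vstar i (fun j => V j ω) then (1 : ℝ) else 0)) :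
    ENNReal.ofReal α
      ≤ ℙ {ω | V (Fin.last n) ω ≤ vstar (Fin.last n) (fun j => V j ω)} :=
  stmt_10_general ℙ n V hmeas hexch vstar hvmeas hequiv α hcov
end

section
/- In the setting of the previous abstraction with weights: let $(X_i, V_i)$, $i=1,\ldots,n+1$, be such that conditional on the unordered multiset of data values $\{z_1,\ldots,z_{n+1}\}$, the index occupied by the test point is $i$ with probability $w(x_i)/\sum_j w(x_j)$ for a positive function $w$. Let $v^*_i$ be permutation-equivariant statistics. If almost surely $\sum_{i=1}^{n+1} \frac{w(X_i)}{\sum_{j=1}^{n+1} w(X_j)} \mathbb{1}\{V_i \le v^*_i\} \ge \alpha$, then $\mathbb{P}\{V_{n+1} \le v^*_{n+1}\} \ge \alpha$. -/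
/-!
Write `μ = ν.withDensity (g(z_j))` with `ν` exchangeable. The `μ`-integral of the `i`-th term
`g(z_i) / ∑ₖ g(z_k) · 1{z ∈ E_i}` of the weighted coverage is its `ν`-integral against `g(z_j)`;
swapping coordinates `i` and `j` (which preserves `ν`, and the family `E` is equivariant) turns it
into the `ν`-integral of `g(z_i) · g(z_j) / ∑ₖ g(z_k) · 1{z ∈ E_j}`. Summing over `i` the
normalization cancels, so the expected weighted coverage under `μ` is exactly `μ(E_j)`; the
hypothesis bounds it below by `α`.
-/

open MeasureTheory Finset

open scoped ENNReal

theorem isProbabilityMeasure_withDensity_ofReal_div_integral {X : Type*} [MeasurableSpace X]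
    {ν : Measure X} {f : X → ℝ} (hf : 0 ≤ᵐ[ν] f) (hpos : 0 < ∫ x, f x ∂ν) :
    IsProbabilityMeasure (ν.withDensity fun x => ENNReal.ofReal (f x / ∫ x, f x ∂ν)) := by
  have hint : Integrable f ν := .of_integral_ne_zero hpos.ne'
  constructor
  rw [withDensity_apply _ MeasurableSet.univ, Measure.restrict_univ]
  simp_rw [div_eq_mul_inv, ENNReal.ofReal_mul' (inv_nonneg.2 hpos.le)]
  rw [lintegral_mul_const' _ _ ENNReal.ofReal_ne_top, ← ofReal_integral_eq_lintegral_ofReal hint hf,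
    ← ENNReal.ofReal_mul hpos.le, mul_inv_cancel₀ hpos.ne', ENNReal.ofReal_one]

theorem ofReal_sum_div_sum_mul_ite {ι : Type*} [Fintype ι] {w : ι → ℝ} (hw : ∀ i, 0 < w i)
    {c : ℝ} (hc : 0 < c) (p : ι → Prop) [DecidablePred p] :
    ENNReal.ofReal (∑ i, w i / (∑ j, w j) * if p i then 1 else 0)
      = ∑ i, ENNReal.ofReal (w i / c) / (∑ k, ENNReal.ofReal (w k / c)) * if p i then 1 else 0 := by
  have hweight : ∀ i, 0 ≤ w i / ∑ j, w j := fun i =>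
    div_nonneg (hw i).le (Finset.sum_nonneg fun j _ => (hw j).le)
  rw [ENNReal.ofReal_sum_of_nonneg fun i _ => mul_nonneg (hweight i) (by positivity)]
  refine Finset.sum_congr rfl fun i _ => ?_
  have hsum : 0 < ∑ j, w j := Finset.sum_pos (fun j _ => hw j) ⟨i, mem_univ i⟩
  rw [ENNReal.ofReal_mul (hweight i),
    ← ENNReal.ofReal_sum_of_nonneg fun k _ => div_nonneg (hw k).le hc.le, ← Finset.sum_div,
    ← ENNReal.ofReal_div_of_pos (div_pos hsum hc), div_div_div_cancel_right₀ hc.ne']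
  split_ifs <;> simp

section Exchangeable

variable {ι α : Type*} [MeasurableSpace α] {ν : Measure (ι → α)}

theorem lintegral_comp_perm_of_exchangeable
    (hν : ∀ σ : Equiv.Perm ι, ν.map (fun z i => z (σ i)) = ν) (σ : Equiv.Perm ι)
    {F : (ι → α) → ℝ≥0∞} (hF : Measurable F) :
    ∫⁻ z, F (fun i => z (σ i)) ∂ν = ∫⁻ z, F z ∂ν :=
  MeasurePreserving.lintegral_comp ⟨by fun_prop, hν σ⟩ hF

theorem lintegral_mul_swap_of_exchangeable [DecidableEq ι]
    (hν : ∀ σ : Equiv.Perm ι, ν.map (fun z i => z (σ i)) = ν)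
    {g : α → ℝ≥0∞} (hg : Measurable g) {F : ι → (ι → α) → ℝ≥0∞} (hF : ∀ i, Measurable (F i))
    (hequiv : ∀ (σ : Equiv.Perm ι) z i, F i (fun k => z (σ k)) = F (σ i) z) (i j : ι) :
    ∫⁻ z, g (z j) * F i z ∂ν = ∫⁻ z, g (z i) * F j z ∂ν := by
  rw [← lintegral_comp_perm_of_exchangeable hν (Equiv.swap i j)
    (F := fun z => g (z j) * F i z) (by fun_prop)]
  simp only [hequiv, Equiv.swap_apply_left, Equiv.swap_apply_right]

theorem lintegral_sum_div_sum_mul_indicator_withDensity [Fintype ι]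
    (hν : ∀ σ : Equiv.Perm ι, ν.map (fun z i => z (σ i)) = ν)
    {g : α → ℝ≥0∞} (hg : Measurable g) (hg0 : ∀ a, g a ≠ 0) (hgtop : ∀ a, g a ≠ ∞)
    {E : ι → Set (ι → α)} (hE : ∀ i, MeasurableSet (E i))
    (hequiv : ∀ (σ : Equiv.Perm ι) z i, (fun k => z (σ k)) ∈ E i ↔ z ∈ E (σ i)) (j : ι) :
    ∫⁻ z, ∑ i, g (z i) / (∑ k, g (z k)) * (E i).indicator 1 z ∂ν.withDensity (fun z => g (z j))
      = ν.withDensity (fun z => g (z j)) (E j) := by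
  classical
  set F : ι → (ι → α) → ℝ≥0∞ := fun i z => g (z i) / (∑ k, g (z k)) * (E i).indicator 1 z
  have hF : ∀ i, Measurable (F i) := fun i =>
    ((hg.comp (measurable_pi_apply i)).div (by fun_prop)).mul (measurable_one.indicator (hE i))
  have hFequiv : ∀ (σ : Equiv.Perm ι) z i, F i (fun k => z (σ k)) = F (σ i) z := by
    intro σ z i
    simp only [F, Set.indicator_apply, Pi.one_apply, hequiv, Equiv.sum_comp σ fun k => g (z k)]
  have hsum : ∀ z, (∑ i, g (z i)) * F j z = g (z j) * (E j).indicator 1 z := fun z => by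
    rw [← mul_assoc, ENNReal.mul_div_cancel
      (fun h => hg0 (z j) (Finset.sum_eq_zero_iff.1 h j (mem_univ j)))
      (ENNReal.sum_ne_top.2 fun k _ => hgtop (z k))]
  calc _ = ∑ i, ∫⁻ z, g (z j) * F i z ∂ν := by
        rw [lintegral_finsetSum _ fun i _ => hF i]
        exact Finset.sum_congr rfl fun i _ =>
          lintegral_withDensity_eq_lintegral_mul _ (by fun_prop) (hF i)
    _ = ∫⁻ z, (∑ i, g (z i)) * F j z ∂ν := by
        simp_rw [lintegral_mul_swap_of_exchangeable hν hg hF hFequiv _ j, Finset.sum_mul]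
        rw [lintegral_finsetSum _ fun i _ => by fun_prop]
    _ = _ := by
        simp_rw [hsum]
        rw [withDensity_apply _ (hE j), ← lintegral_indicator (hE j)]
        simp [Set.indicator_apply]

end Exchangeable

theorem stmt_11_general (n : ℕ) (ν : Measure (Fin (n + 1) → ℝ × ℝ)) [IsProbabilityMeasure ν]
    (hνexch : ∀ σ : Equiv.Perm (Fin (n + 1)),
      Measure.map (fun z => fun i => z (σ i)) ν = ν)
    (w : ℝ → ℝ) (hwpos : ∀ x, 0 < w x) (hwmeas : Measurable w)
    (c : ℝ) (hc : c = ∫ z, w (z (Fin.last n)).1 ∂ν) (hc0 : 0 < c)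
    (μ : Measure (Fin (n + 1) → ℝ × ℝ))
    (hμ : μ = ν.withDensity (fun z => ENNReal.ofReal (w (z (Fin.last n)).1 / c)))
    (vstar : Fin (n + 1) → (Fin (n + 1) → ℝ × ℝ) → ℝ)
    (hvmeas : ∀ i, Measurable (vstar i))
    (hequiv : ∀ (σ : Equiv.Perm (Fin (n + 1))) (z : Fin (n + 1) → ℝ × ℝ) (i : Fin (n + 1)),
      vstar i (fun j => z (σ j)) = vstar (σ i) z)
    (α : ℝ)
    (hcov : ∀ᵐ z ∂μ,
      α ≤ ∑ i, (w (z i).1 / ∑ j, w (z j).1) *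
        (if (z i).2 ≤ vstar i z then (1 : ℝ) else 0)) :
    ENNReal.ofReal α ≤ μ {z | (z (Fin.last n)).2 ≤ vstar (Fin.last n) z} := by
  set g : ℝ × ℝ → ℝ≥0∞ := fun x => ENNReal.ofReal (w x.1 / c)
  set E : Fin (n + 1) → Set (Fin (n + 1) → ℝ × ℝ) := fun i => {z | (z i).2 ≤ vstar i z}
  have hμprob : IsProbabilityMeasure μ := by
    subst hμ hc
    exact isProbabilityMeasure_withDensity_ofReal_div_integral
      (ae_of_all _ fun z => (hwpos _).le) hc0
  have hcoverage : ∀ z, ENNReal.ofReal (∑ i, (w (z i).1 / ∑ j, w (z j).1) *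
      (if (z i).2 ≤ vstar i z then (1 : ℝ) else 0))
        = ∑ i, g (z i) / (∑ k, g (z k)) * (E i).indicator 1 z := fun z => by
    rw [ofReal_sum_div_sum_mul_ite (w := fun k => w (z k).1) (fun _ => hwpos _) hc0]
    simp [E, g, Set.indicator_apply]
  calc ENNReal.ofReal α = ∫⁻ _, ENNReal.ofReal α ∂μ := by simp
    _ ≤ ∫⁻ z, ∑ i, g (z i) / (∑ k, g (z k)) * (E i).indicator 1 z ∂μ :=
        lintegral_mono_ae <| hcov.mono fun z hz =>
          (ENNReal.ofReal_le_ofReal hz).trans_eq (hcoverage z)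
    _ = μ (E (Fin.last n)) := by
        rw [hμ]
        refine lintegral_sum_div_sum_mul_indicator_withDensity hνexch (by fun_prop)
          (fun _ => (ENNReal.ofReal_pos.2 (div_pos (hwpos _) hc0)).ne')
          (fun _ => ENNReal.ofReal_ne_top)
          (fun i => measurableSet_le (by fun_prop) (hvmeas i)) (fun σ z i => ?_) _
        simp only [Set.mem_ofPred_eq, hequiv]

/-- Theorem 5 (localized conformal prediction under covariate shift), abstract form:
the data vector `z = ((X_i, V_i))_{i≤n+1}` is weighted-exchangeable, i.e. its law `μ`
is obtained from an exchangeable law `ν` by reweighting with `w(X_{n+1})` (so that,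
conditional on the unordered data, index `i` is the test point with probability
`w(X_i)/∑_j w(X_j)`).  If the `w`-weighted average coverage of the
permutation-equivariant thresholds `v*_i` is a.s. at least `α`, then
`P(V_{n+1} ≤ v*_{n+1}) ≥ α`. -/
theorem stmt_11 (n : ℕ) (ν : Measure (Fin (n + 1) → ℝ × ℝ)) [IsProbabilityMeasure ν]
    (hνexch : ∀ σ : Equiv.Perm (Fin (n + 1)),
      Measure.map (fun z => fun i => z (σ i)) ν = ν)
    (w : ℝ → ℝ) (hwpos : ∀ x, 0 < w x) (hwmeas : Measurable w)
    (c : ℝ) (hc : c = ∫ z, w (z (Fin.last n)).1 ∂ν) (hc0 : 0 < c)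
    (μ : Measure (Fin (n + 1) → ℝ × ℝ))
    (hμ : μ = ν.withDensity (fun z => ENNReal.ofReal (w (z (Fin.last n)).1 / c)))
    (vstar : Fin (n + 1) → (Fin (n + 1) → ℝ × ℝ) → ℝ)
    (hvmeas : ∀ i, Measurable (vstar i))
    (hequiv : ∀ (σ : Equiv.Perm (Fin (n + 1))) (z : Fin (n + 1) → ℝ × ℝ) (i : Fin (n + 1)),
      vstar i (fun j => z (σ j)) = vstar (σ i) z)
    (α : ℝ) (hα : α ∈ Set.Ioo (0:ℝ) 1)
    (hcov : ∀ᵐ z ∂μ,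
      α ≤ ∑ i, (w (z i).1 / ∑ j, w (z j).1) *
        (if (z i).2 ≤ vstar i z then (1 : ℝ) else 0)) :
    ENNReal.ofReal α ≤ μ {z | (z (Fin.last n)).2 ≤ vstar (Fin.last n) z} :=
  stmt_11_general n ν hνexch w hwpos hwmeas c hc hc0 μ hμ vstar hvmeas hequiv α hcov
end
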